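/- With D̂ the optimal 2×2 scaling for a full-rank L ∈ ℝ^{2n×2} (entries ĉ = ‖L₂‖₂/(det LᵀL)^{1/4}, f̂ = −L₁ᵀL₂/(‖L₂‖₂ (det LᵀL)^{1/4})), the spectral condition number of D̂ equals κ₂(D̂) = (‖L‖_F² + √(‖L‖_F⁴ − 4 det(LᵀL))) / (2√(det(LᵀL))), and the Frobenius condition number equals κ_F(D̂) = ‖L‖_F² / √(det(LᵀL)). -/

import Mathlib

open Matrix

noncomputable def euclNorm {m : ℕ} (v : Fin m → ℝ) : ℝ := Real.sqrt (∑ i, v i ^ 2)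

noncomputable def frob {m n : ℕ} (A : Matrix (Fin m) (Fin n) ℝ) : ℝ :=
  Real.sqrt (∑ i, ∑ j, A i j ^ 2)

noncomputable def specNorm {m n : ℕ} (A : Matrix (Fin m) (Fin n) ℝ) : ℝ :=
  ‖(Matrix.toEuclideanLin A).toContinuousLinearMap‖

theorem Matrix.isHermitian_transpose_mul_self {m k : Type*} [Fintype m]
    (A : Matrix m k ℝ) : (Aᵀ * A).IsHermitian := by
  have h := Matrix.isHermitian_conjTranspose_mul_self A
  rwa [Matrix.conjTranspose_eq_transpose_of_trivial] at h

noncomputable def sigmaMax (B : Matrix (Fin 2) (Fin 2) ℝ) : ℝ :=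
  Real.sqrt (max ((Matrix.isHermitian_transpose_mul_self B).eigenvalues 0)
                 ((Matrix.isHermitian_transpose_mul_self B).eigenvalues 1))

noncomputable def sigmaMin (B : Matrix (Fin 2) (Fin 2) ℝ) : ℝ :=
  Real.sqrt (min ((Matrix.isHermitian_transpose_mul_self B).eigenvalues 0)
                 ((Matrix.isHermitian_transpose_mul_self B).eigenvalues 1))

/-! Since `det D̂ = 1`, the eigenvalues of `D̂ᵀD̂` are `μ` and `1/μ` with `μ + 1/μ = ‖D̂‖_F²`, and
`D̂⁻¹` is the adjugate of `D̂`; hence `κ_F(D̂) = ‖D̂‖_F²` and `κ₂(D̂) = μ` is the larger root of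
`x² - ‖D̂‖_F² x + 1`. Both formulas then follow from
`‖D̂‖_F² = ĉ² + f̂² + ĉ⁻² = ‖L‖_F² / √det(LᵀL)`, an identity that rests on
`det(LᵀL) = ‖L₁‖²‖L₂‖² - (L₁ᵀL₂)²`. -/

lemma frob_nonneg {m n : ℕ} (A : Matrix (Fin m) (Fin n) ℝ) : 0 ≤ frob A :=
  Real.sqrt_nonneg _

lemma frob_sq {m n : ℕ} (A : Matrix (Fin m) (Fin n) ℝ) : frob A ^ 2 = ∑ i, ∑ j, A i j ^ 2 :=
  Real.sq_sqrt (by positivity)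

lemma frob_sq_eq_trace_transpose_mul_self {m n : ℕ} (A : Matrix (Fin m) (Fin n) ℝ) :
    frob A ^ 2 = (Aᵀ * A).trace := by
  rw [frob_sq, Finset.sum_comm]
  simp only [trace, diag, mul_apply, transpose_apply, sq]

lemma frob_sq_fin_two_of (a b c d : ℝ) :
    frob !![a, b; c, d] ^ 2 = a ^ 2 + b ^ 2 + c ^ 2 + d ^ 2 := by
  simp only [frob_sq, Fin.sum_univ_two, of_apply, cons_val', cons_val_fin_one, cons_val_zero,
    cons_val_one]
  ring

lemma frob_adjugate_fin_two (B : Matrix (Fin 2) (Fin 2) ℝ) : frob B.adjugate = frob B := by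
  refine (sq_eq_sq₀ (frob_nonneg _) (frob_nonneg _)).1 ?_
  rw [eta_fin_two B, adjugate_fin_two_of, frob_sq_fin_two_of, frob_sq_fin_two_of]
  ring

lemma frob_inv_of_det_eq_one {B : Matrix (Fin 2) (Fin 2) ℝ} (hB : B.det = 1) :
    frob B⁻¹ = frob B := by
  rw [inv_def, hB, Ring.inverse_one, one_smul, frob_adjugate_fin_two]

lemma Matrix.IsHermitian.trace_eq_eigenvalues_fin_two {A : Matrix (Fin 2) (Fin 2) ℝ}
    (hA : A.IsHermitian) : A.trace = hA.eigenvalues 0 + hA.eigenvalues 1 := by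
  simp [hA.trace_eq_sum_eigenvalues, Fin.sum_univ_two]

lemma Matrix.IsHermitian.det_eq_eigenvalues_fin_two {A : Matrix (Fin 2) (Fin 2) ℝ}
    (hA : A.IsHermitian) : A.det = hA.eigenvalues 0 * hA.eigenvalues 1 := by
  simp [hA.det_eq_prod_eigenvalues, Fin.prod_univ_two]

lemma sqrt_max_div_sqrt_min {x y : ℝ} (hx : 0 < x) (hy : 0 < y) :
    √(max x y) / √(min x y) = (x + y + √((x + y) ^ 2 - 4 * (x * y))) / (2 * √(x * y)) := by
  wlog h : y ≤ x generalizing x y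
  · rw [max_comm, min_comm, add_comm x, mul_comm x]
    exact this hy hx (le_of_not_ge h)
  rw [max_eq_left h, min_eq_right h, show (x + y) ^ 2 - 4 * (x * y) = (x - y) ^ 2 by ring,
    Real.sqrt_sq (sub_nonneg.2 h), Real.sqrt_mul hx.le]
  have hx' := Real.sqrt_pos.2 hx
  have hy' := Real.sqrt_pos.2 hy
  field_simp
  rw [Real.sq_sqrt hx.le]
  ring

lemma sigmaMax_div_sigmaMin (B : Matrix (Fin 2) (Fin 2) ℝ) (hB : B.det ≠ 0) :
    sigmaMax B / sigmaMin B =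
      (frob B ^ 2 + √(frob B ^ 4 - 4 * B.det ^ 2)) / (2 * |B.det|) := by
  set e := (isHermitian_transpose_mul_self B).eigenvalues
  have hsum : e 0 + e 1 = frob B ^ 2 := by
    rw [← IsHermitian.trace_eq_eigenvalues_fin_two, frob_sq_eq_trace_transpose_mul_self]
  have hprod : e 0 * e 1 = B.det ^ 2 := by
    rw [← IsHermitian.det_eq_eigenvalues_fin_two, det_mul, det_transpose, sq]
  have hnonneg : ∀ i, 0 ≤ e i := eigenvalues_conjTranspose_mul_self_nonneg B
  have hpos : 0 < e 0 * e 1 := by rw [hprod]; positivity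
  have h0 : 0 < e 0 := lt_of_le_of_ne (hnonneg 0) fun h => by simp [← h] at hpos
  have h1 : 0 < e 1 := pos_of_mul_pos_right hpos (hnonneg 0)
  rw [sigmaMax, sigmaMin, sqrt_max_div_sqrt_min h0 h1, hsum, hprod, Real.sqrt_sq_eq_abs]
  ring_nf

section Gram

variable {m : ℕ} (L : Matrix (Fin m) (Fin 2) ℝ)

lemma det_transpose_mul_self_fin_two :
    (Lᵀ * L).det = (∑ i, L i 0 ^ 2) * (∑ i, L i 1 ^ 2) - (∑ i, L i 0 * L i 1) ^ 2 := by
  rw [det_fin_two]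
  simp only [mul_apply, transpose_apply, sq]
  rw [Finset.sum_congr rfl fun i _ => mul_comm (L i 1) (L i 0)]

lemma sum_sq_col_one_pos (hL : 0 < (Lᵀ * L).det) : 0 < ∑ i, L i 1 ^ 2 := by
  refine (Finset.sum_nonneg fun i _ => sq_nonneg (L i 1)).lt_of_ne fun h => ?_
  rw [det_transpose_mul_self_fin_two, ← h] at hL
  nlinarith

lemma frob_sq_eq_add_col_sq : frob L ^ 2 = ∑ i, L i 0 ^ 2 + ∑ i, L i 1 ^ 2 := by
  simp only [frob_sq, Fin.sum_univ_two, Finset.sum_add_distrib]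

end Gram

lemma det_transpose_mul_self_pos {m n : Type*} [Fintype m] [Fintype n] [DecidableEq n]
    (L : Matrix m n ℝ) (hL : LinearIndependent ℝ L.col) : 0 < (Lᵀ * L).det := by
  simpa using (PosDef.conjTranspose_mul_self L (mulVec_injective_iff.2 hL)).det_pos

lemma frob_sq_optimal_scaling {a b p δ : ℝ} (hb : 0 < b) (hδ : 0 < δ)
    (hδsq : δ ^ 2 = a * b - p ^ 2) :
    frob !![√b / √δ, -p / (√b * √δ); 0, (√b / √δ)⁻¹] ^ 2 = (a + b) / δ := by
  rw [frob_sq_fin_two_of, div_pow, div_pow, mul_pow, inv_pow, div_pow, neg_sq,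
    Real.sq_sqrt hb.le, Real.sq_sqrt hδ.le]
  field_simp
  linear_combination hδsq

theorem cond_of_optimal_scaling {n : ℕ} (L : Matrix (Fin (2*n)) (Fin 2) ℝ)
    (hLI : LinearIndependent ℝ ![fun i => L i 0, fun i => L i 1])
    (cop fop : ℝ)
    (hc : cop = euclNorm (fun i => L i 1) / Real.sqrt (Real.sqrt (Lᵀ * L).det))
    (hf : fop = -(∑ i, L i 0 * L i 1) /
        (euclNorm (fun i => L i 1) * Real.sqrt (Real.sqrt (Lᵀ * L).det))) :
    sigmaMax !![cop, fop; 0, cop⁻¹] / sigmaMin !![cop, fop; 0, cop⁻¹] =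
      (frob L ^ 2 + Real.sqrt (frob L ^ 4 - 4 * (Lᵀ * L).det)) /
        (2 * Real.sqrt (Lᵀ * L).det) ∧
    frob !![cop, fop; 0, cop⁻¹] * frob (!![cop, fop; 0, cop⁻¹] : Matrix (Fin 2) (Fin 2) ℝ)⁻¹ =
      frob L ^ 2 / Real.sqrt (Lᵀ * L).det := by
  have hcol : ![fun i => L i 0, fun i => L i 1] = L.col := by
    ext j i; fin_cases j <;> rfl
  have hdet : 0 < (Lᵀ * L).det := det_transpose_mul_self_pos L (hcol ▸ hLI)
  set δ := √(Lᵀ * L).det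
  have hδ : 0 < δ := Real.sqrt_pos.2 hdet
  have hdet_eq : (Lᵀ * L).det = δ ^ 2 := (Real.sq_sqrt hdet.le).symm
  have hδsq := hdet_eq.symm.trans (det_transpose_mul_self_fin_two L)
  have hb := sum_sq_col_one_pos L hdet
  have hD := frob_sq_optimal_scaling hb hδ hδsq
  rw [← frob_sq_eq_add_col_sq] at hD
  have hnorm : euclNorm (fun i => L i 1) = √(∑ i, L i 1 ^ 2) := rfl
  rw [hnorm] at hc hf
  rw [← hc, ← hf] at hD
  set D : Matrix (Fin 2) (Fin 2) ℝ := !![cop, fop; 0, cop⁻¹]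
  have hdetD : D.det = 1 := by
    rw [det_fin_two_of, mul_zero, sub_zero, mul_inv_cancel₀ (hc ▸ by positivity)]
  refine ⟨?_, ?_⟩
  · have hD4 : frob D ^ 4 = (frob L ^ 2 / δ) ^ 2 := by rw [← hD]; ring
    have hdisc : frob L ^ 4 - 4 * δ ^ 2 = δ ^ 2 * ((frob L ^ 2 / δ) ^ 2 - 4 * 1 ^ 2) := by
      field_simp
    rw [sigmaMax_div_sigmaMin D (hdetD ▸ one_ne_zero), hdetD, abs_one, hD4, hD, hdet_eq, hdisc,
      Real.sqrt_mul (sq_nonneg δ), Real.sqrt_sq hδ.le]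
    field_simp
  · rw [frob_inv_of_det_eq_one hdetD, ← sq, hD]
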